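/- For all n ≥ 0 and all x, y and any parameter α: Σ_{k=0}^{n} L_k^{(α)}(x) · L_{n-k}^{(-n-α-1)}(-y) = (y-x)^n / n!. -/
import Mathlib


open Finset Real

/-- Pochhammer symbol (rising factorial) `(a)_k`. -/
noncomputable def poch (a : ℝ) (k : ℕ) : ℝ := (ascPochhammer ℝ k).eval a

/-- Classical Laguerre polynomial `L_n^{(α)}(x)` for arbitrary parameter α. -/
noncomputable def lag (α : ℝ) (n : ℕ) (x : ℝ) : ℝ :=
  ∑ k ∈ Finset.range (n + 1),
    (-1 : ℝ) ^ k * (poch (α + k + 1) (n - k) / (Nat.factorial (n - k))) *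
      x ^ k / (Nat.factorial k)

/-- Classical Jacobi polynomial `P_n^{(α,β)}(x)` for arbitrary parameters. -/
noncomputable def jac (α β : ℝ) (n : ℕ) (x : ℝ) : ℝ :=
  ∑ k ∈ Finset.range (n + 1),
    (poch ((n : ℝ) + α + β + 1) k / (Nat.factorial k)) *
      (poch (α + k + 1) (n - k) / (Nat.factorial (n - k))) * ((x - 1) / 2) ^ k

/-- Generalized binomial coefficient `C(x, k)`. -/
noncomputable def genBinom (x : ℝ) (k : ℕ) : ℝ :=
  (∏ j ∈ Finset.range k, (x - j)) / (Nat.factorial k)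

/-- Charlier polynomial `C_n^{(a)}(x)`. -/
noncomputable def charlier (a : ℝ) (n : ℕ) (x : ℝ) : ℝ :=
  ∑ k ∈ Finset.range (n + 1), genBinom x k * (-a) ^ (n - k) / (Nat.factorial (n - k))

lemma poch_zero (a : ℝ) : poch a 0 = 1 := by simp [poch]

lemma poch_succ (a : ℝ) (k : ℕ) : poch a (k + 1) = poch a k * (a + k) := by
  simp [poch, ascPochhammer_succ_eval]

lemma poch_one_sub_self (N : ℕ) (hN : 1 ≤ N) : poch (1 - (N : ℝ)) N = 0 := by
  obtain ⟨M, rfl⟩ := Nat.exists_eq_add_of_le hN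
  rw [add_comm, poch_succ]
  have : (1 : ℝ) - (↑(M + 1)) + ↑M = 0 := by push_cast; ring
  rw [this, mul_zero]

lemma vdm (a b : ℝ) : ∀ N : ℕ,
    ∑ m ∈ range (N + 1), (N.choose m : ℝ) * poch a m * poch b (N - m) = poch (a + b) N := by
  intro N
  induction N with
  | zero => simp [poch_zero]
  | succ N ih =>
    rw [Finset.sum_range_succ' _ (N + 1)]
    have h1 : ∀ m ∈ range (N + 1),
        ((N + 1).choose (m + 1) : ℝ) * poch a (m + 1) * poch b (N + 1 - (m + 1))
          = (N.choose m : ℝ) * poch a m * poch b (N - m) * (a + m)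
            + (N.choose (m + 1) : ℝ) * poch a (m + 1) * poch b (N - m) := by
      intro m hm
      rw [Nat.choose_succ_succ, Nat.cast_add, poch_succ]
      have : N + 1 - (m + 1) = N - m := by omega
      rw [this]; ring
    rw [Finset.sum_congr rfl h1, Finset.sum_add_distrib]
    have h2 : ∑ m ∈ range (N + 1), (N.choose (m + 1) : ℝ) * poch a (m + 1) * poch b (N - m)
          + ((N + 1).choose 0 : ℝ) * poch a 0 * poch b (N + 1 - 0)
        = ∑ m ∈ range (N + 1 + 1), (N.choose m : ℝ) * poch a m * poch b (N + 1 - m) := by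
      rw [Finset.sum_range_succ' (fun m => (N.choose m : ℝ) * poch a m * poch b (N + 1 - m)) (N + 1)]
      congr 1
      · apply Finset.sum_congr rfl; intro m hm
        have : N + 1 - (m + 1) = N - m := by omega
        rw [this]
      · simp
    rw [add_assoc, h2]
    rw [Finset.sum_range_succ _ (N + 1), Nat.choose_succ_self, Nat.cast_zero, zero_mul, zero_mul,
      add_zero, ← Finset.sum_add_distrib]
    have h3 : ∀ m ∈ range (N + 1),
        (N.choose m : ℝ) * poch a m * poch b (N - m) * (a + m)
          + (N.choose m : ℝ) * poch a m * poch b (N + 1 - m)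
        = (N.choose m : ℝ) * poch a m * poch b (N - m) * (a + b + N) := by
      intro m hm
      rw [mem_range] at hm
      have hm' : m ≤ N := by omega
      have : N + 1 - m = (N - m) + 1 := by omega
      rw [this, poch_succ]
      have : ((N - m : ℕ) : ℝ) = (N : ℝ) - m := by
        rw [Nat.cast_sub hm']
      rw [this]; ring
    rw [Finset.sum_congr rfl h3, ← Finset.sum_mul, ih, ← poch_succ]

lemma vdm' (a b : ℝ) (N : ℕ) :
    ∑ m ∈ range (N + 1), poch a m / (Nat.factorial m) * (poch b (N - m) / (Nat.factorial (N - m)))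
      = poch (a + b) N / (Nat.factorial N) := by
  rw [← vdm a b N, Finset.sum_div]
  apply Finset.sum_congr rfl
  intro m hm
  rw [mem_range] at hm
  have hm' : m ≤ N := by omega
  have h := Nat.choose_mul_factorial_mul_factorial hm'
  have h' : ((N.choose m : ℕ) : ℝ) * (Nat.factorial m) * (Nat.factorial (N - m))
      = (Nat.factorial N : ℝ) := by exact_mod_cast congrArg (Nat.cast : ℕ → ℝ) h
  have hf1 : (Nat.factorial m : ℝ) ≠ 0 := Nat.cast_ne_zero.mpr (Nat.factorial_ne_zero m)
  have hf2 : (Nat.factorial (N - m) : ℝ) ≠ 0 := Nat.cast_ne_zero.mpr (Nat.factorial_ne_zero _)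
  have hf3 : (Nat.factorial N : ℝ) ≠ 0 := Nat.cast_ne_zero.mpr (Nat.factorial_ne_zero N)
  field_simp
  rw [← h']; ring

lemma tri1 (n : ℕ) (f : ℕ → ℕ → ℝ) :
    ∑ k ∈ range (n + 1), ∑ i ∈ range (k + 1), f i (k - i)
      = ∑ i ∈ range (n + 1), ∑ m ∈ range (n + 1 - i), f i m := by
  rw [Finset.sum_sigma', Finset.sum_sigma']
  refine Finset.sum_nbij' (fun x => ⟨x.2, x.1 - x.2⟩) (fun x => ⟨x.1 + x.2, x.1⟩) ?_ ?_ ?_ ?_ ?_ <;>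
    simp only [Finset.mem_sigma, Finset.mem_range, Sigma.forall] <;>
    intro a b h
  · omega
  · omega
  · have hba : b + (a - b) = a := by omega
    rw [hba]
  · have hab : a + b - a = b := by omega
    rw [hab]
  · trivial

lemma tri2 (N : ℕ) (g : ℕ → ℕ → ℝ) :
    ∑ m ∈ range (N + 1), ∑ j ∈ range (N - m + 1), g m j
      = ∑ j ∈ range (N + 1), ∑ m ∈ range (N - j + 1), g m j := by
  rw [Finset.sum_sigma', Finset.sum_sigma']
  refine Finset.sum_nbij' (fun x => ⟨x.2, x.1⟩) (fun x => ⟨x.2, x.1⟩) ?_ ?_ ?_ ?_ ?_ <;>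
    simp only [Finset.mem_sigma, Finset.mem_range, Sigma.forall] <;>
    intro a b h
  · omega
  · omega
  · trivial
  · trivial
  · trivial

lemma final_binom (n : ℕ) (x y : ℝ) :
    ∑ i ∈ range (n + 1),
        (-1 : ℝ) ^ i * x ^ i / (Nat.factorial i) * (y ^ (n - i) / (Nat.factorial (n - i)))
      = (y - x) ^ n / (Nat.factorial n) := by
  have h : y - x = y + (-x) := by ring
  rw [h, add_pow, Finset.sum_div, ← Finset.sum_range_reflect]
  apply Finset.sum_congr rfl
  intro i hi
  rw [mem_range] at hi
  have hi' : i ≤ n := by omega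
  have h0 : n + 1 - 1 - i = n - i := by omega
  rw [h0]
  have h1 : n - (n - i) = i := by omega
  rw [h1]
  have hc := Nat.choose_mul_factorial_mul_factorial hi'
  have hc' : ((n.choose i : ℕ) : ℝ) * (Nat.factorial i) * (Nat.factorial (n - i))
      = (Nat.factorial n : ℝ) := by exact_mod_cast congrArg (Nat.cast : ℕ → ℝ) hc
  have hf1 : (Nat.factorial i : ℝ) ≠ 0 := Nat.cast_ne_zero.mpr (Nat.factorial_ne_zero i)
  have hf2 : (Nat.factorial (n - i) : ℝ) ≠ 0 := Nat.cast_ne_zero.mpr (Nat.factorial_ne_zero _)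
  have hf3 : (Nat.factorial n : ℝ) ≠ 0 := Nat.cast_ne_zero.mpr (Nat.factorial_ne_zero n)
  have hneg : (-x) ^ (n - i) = (-1 : ℝ) ^ (n - i) * x ^ (n - i) := by rw [neg_pow]
  field_simp
  rw [← hc', hneg]
  ring

theorem stmt13 (α : ℝ) (n : ℕ) (x y : ℝ) :
    ∑ k ∈ Finset.range (n + 1), lag α k x * lag (-(n : ℝ) - α - 1) (n - k) (-y) =
      (y - x) ^ n / (Nat.factorial n) := by
  set β : ℝ := -(n : ℝ) - α - 1 with hβ
  set A : ℕ → ℕ → ℝ := fun i m =>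
    (-1 : ℝ) ^ i * (poch (α + i + 1) m / (Nat.factorial m)) * x ^ i / (Nat.factorial i) with hA
  set B : ℕ → ℕ → ℝ := fun j m =>
    (-1 : ℝ) ^ j * (poch (β + j + 1) m / (Nat.factorial m)) * (-y) ^ j / (Nat.factorial j) with hB
  have expand : ∀ k, lag α k x * lag β (n - k) (-y)
      = ∑ i ∈ range (k + 1), ∑ j ∈ range (n - k + 1), A i (k - i) * B j (n - k - j) := by
    intro k
    rw [lag, lag, Finset.sum_mul_sum]
  calc
    ∑ k ∈ range (n + 1), lag α k x * lag β (n - k) (-y)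
        = ∑ k ∈ range (n + 1), ∑ i ∈ range (k + 1),
            ∑ j ∈ range (n - i - (k - i) + 1), A i (k - i) * B j (n - i - (k - i) - j) := by
          apply Finset.sum_congr rfl
          intro k hk
          rw [mem_range] at hk
          rw [expand k]
          apply Finset.sum_congr rfl
          intro i hi
          rw [mem_range] at hi
          have h1 : n - i - (k - i) = n - k := by omega
          simp only [h1]
    _ = ∑ i ∈ range (n + 1), ∑ m ∈ range (n + 1 - i),
            ∑ j ∈ range (n - i - m + 1), A i m * B j (n - i - m - j) :=
          tri1 n (fun i m => ∑ j ∈ range (n - i - m + 1), A i m * B j (n - i - m - j))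
    _ = ∑ i ∈ range (n + 1), ∑ j ∈ range (n - i + 1),
            ∑ m ∈ range (n - i - j + 1), A i m * B j (n - i - j - m) := by
          apply Finset.sum_congr rfl
          intro i hi
          rw [mem_range] at hi
          have h1 : n + 1 - i = (n - i) + 1 := by omega
          rw [h1, tri2 (n - i) (fun m j => A i m * B j (n - i - m - j))]
          apply Finset.sum_congr rfl
          intro j hj
          apply Finset.sum_congr rfl
          intro m hm
          have h2 : n - i - m - j = n - i - j - m := by omega
          rw [h2]
    _ = ∑ i ∈ range (n + 1),
            ((-1 : ℝ) ^ i * x ^ i / (Nat.factorial i)) * (y ^ (n - i) / (Nat.factorial (n - i))) := by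
          apply Finset.sum_congr rfl
          intro i hi
          rw [mem_range] at hi
          have hi' : i ≤ n := by omega
          rw [Finset.sum_eq_single_of_mem (n - i) (self_mem_range_succ _)]
          · -- the j = n - i term
            have h0 : n - i - (n - i) = 0 := by omega
            rw [h0, Finset.sum_range_one]
            simp only [hA, hB, Nat.sub_self, Nat.sub_zero, poch_zero, Nat.factorial_zero,
              Nat.cast_one, div_one]
            have hy : (-1 : ℝ) ^ (n - i) * (-y) ^ (n - i) = y ^ (n - i) := by
              rw [← mul_pow]; norm_num
            rw [← hy]
            ring
          · -- other j vanish
            intro j hj hjne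
            rw [mem_range] at hj
            set M : ℕ := n - i - j with hM
            have hM1 : 1 ≤ M := by omega
            have key : ∑ m ∈ range (M + 1), A i m * B j (M - m)
                = ((-1 : ℝ) ^ i * x ^ i / (Nat.factorial i))
                  * ((-1 : ℝ) ^ j * (-y) ^ j / (Nat.factorial j))
                  * (poch ((α + i + 1) + (β + j + 1)) M / (Nat.factorial M)) := by
              rw [← vdm' (α + i + 1) (β + j + 1) M, Finset.mul_sum]
              apply Finset.sum_congr rfl
              intro m hm
              rw [hA, hB]
              ring
            rw [key]
            have hab : (α + i + 1) + (β + j + 1) = 1 - (M : ℝ) := by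
              rw [hβ, hM]
              have : ((n - i - j : ℕ) : ℝ) = (n : ℝ) - i - j := by
                push_cast [Nat.cast_sub (by omega : j ≤ n - i), Nat.cast_sub hi']
                ring
              rw [this]; ring
            rw [hab, poch_one_sub_self M hM1]
            simp
    _ = (y - x) ^ n / (Nat.factorial n) := by
          rw [← final_binom n x y]
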